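/- arXiv:2501.19300 — 4 statements merged into one kernel-verified Lean document; each statement's English description precedes it below -/
import Mathlib

section
/- Suboptimality gap decomposition for pessimistic offline combinatorial optimization: let r be monotone and satisfy the 1-norm TPM smoothness with coefficient B₁, let μ̲ ≤ μ pointwise (valid LCBs), let Ŝ satisfy r(Ŝ;μ̲) ≥ α·max_{S'} r(S';μ̲) (α-approximate maximizer of the LCB reward), and let S* be the optimal action under μ. Then α·r(S*;μ) − r(Ŝ;μ) ≤ α·B₁·Σ_{i∈[m]} p_i^{S*}(μ_i − μ̲_i). -/
open Finset

/-- Suboptimality gap decomposition for pessimistic offline combinatorial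
optimization: if `r` is monotone, 1-norm TPM smooth with coefficient `B₁`,
`μlcb ≤ μ` pointwise, `Shat` is an `α`-approximate maximizer of `r(·;μlcb)`,
and `Sstar` is optimal under `μ`, then
`α·r(S*;μ) − r(Ŝ;μ) ≤ α·B₁·Σ_i p_i^{S*}(μ_i − μlcb_i)`. -/
theorem suboptimality_gap_decomposition
    {𝒮 : Type*} [Fintype 𝒮] [Nonempty 𝒮]
    (m : ℕ) (r : 𝒮 → (Fin m → ℝ) → ℝ) (p : 𝒮 → Fin m → ℝ) (B₁ : ℝ) (hB₁ : 0 < B₁)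
    (hp : ∀ S i, p S i ∈ Set.Icc (0:ℝ) 1)
    (hmono : ∀ S : 𝒮, ∀ μ' μ'' : Fin m → ℝ, (∀ i, μ' i ≤ μ'' i) → r S μ' ≤ r S μ'')
    (hsmooth : ∀ S : 𝒮, ∀ μ' μ'' : Fin m → ℝ,
      |r S μ' - r S μ''| ≤ B₁ * ∑ i, p S i * |μ' i - μ'' i|)
    (μ μlcb : Fin m → ℝ)
    (hμ : ∀ i, μ i ∈ Set.Icc (0:ℝ) 1) (hμlcb : ∀ i, μlcb i ∈ Set.Icc (0:ℝ) 1)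
    (hLCB : ∀ i, μlcb i ≤ μ i)
    (α : ℝ) (hα : 0 < α) (hα1 : α ≤ 1)
    (Sstar Shat : 𝒮)
    (hopt : ∀ S' : 𝒮, r S' μ ≤ r Sstar μ)
    (horacle : ∀ S' : 𝒮, α * r S' μlcb ≤ r Shat μlcb) :
    α * r Sstar μ - r Shat μ ≤ α * B₁ * ∑ i, p Sstar i * (μ i - μlcb i) := by
  have h1 : r Shat μlcb ≤ r Shat μ := hmono _ _ _ hLCB
  have h2 : α * r Sstar μlcb ≤ r Shat μlcb := horacle _
  have h3 : r Sstar μ - r Sstar μlcb ≤ B₁ * ∑ i, p Sstar i * (μ i - μlcb i) := by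
    have := hsmooth Sstar μ μlcb
    have heq : ∑ i, p Sstar i * |μ i - μlcb i| = ∑ i, p Sstar i * (μ i - μlcb i) := by
      refine Finset.sum_congr rfl fun i _ => ?_
      rw [abs_of_nonneg (by linarith [hLCB i])]
    rw [heq] at this
    calc r Sstar μ - r Sstar μlcb ≤ |r Sstar μ - r Sstar μlcb| := le_abs_self _
      _ ≤ _ := this
  nlinarith [h3]
end

section
/- In cascading bandits with item means μ_1 ≥ μ_2 ≥ … ≥ μ_m and uniform offline position sampling q_{ij} = 1/m, the 1-norm data coverage coefficient satisfies C₁ = Σ_{i=1}^{k} (Π_{j=1}^{i−1}(1−μ_j)) / (Σ_{j=1}^{k} (1/m)(1−μ_1)^{j−1}) ≤ μ_1·m/μ_k, provided μ_1 > 0 and μ_k > 0. -/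
open Finset

/-- In cascading bandits with item means `μ_1 ≥ … ≥ μ_m > 0` (0-indexed here as
`μ 0 ≥ … ≥ μ (m-1)`) and uniform offline position sampling `q_{ij} = 1/m`, the
1-norm data coverage coefficient satisfies
`C₁ = Σ_{i<k} (Π_{j<i}(1−μ_j)) / (Σ_{j<k} (1/m)(1−μ_0)^j) ≤ μ_0·m/μ_{k-1}`. -/
theorem cascading_coverage_coefficient_uniform_bound
    (m k : ℕ) (hk : 0 < k) (hkm : k ≤ m) (μ : ℕ → ℝ)
    (hpos : ∀ i, i < m → 0 < μ i) (hle1 : ∀ i, i < m → μ i ≤ 1)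
    (hmono : ∀ i j, i ≤ j → j < m → μ j ≤ μ i) :
    (∑ i ∈ Finset.range k, (∏ j ∈ Finset.range i, (1 - μ j)) /
        (∑ j ∈ Finset.range k, (1 / (m:ℝ)) * (1 - μ 0) ^ j)) ≤
      μ 0 * m / μ (k - 1) := by
  have hm : 0 < m := lt_of_lt_of_le hk hkm
  have hk1m : k - 1 < m := lt_of_lt_of_le (Nat.pred_lt hk.ne') hkm
  have hμ0 : 0 < μ 0 := hpos 0 hm
  have hμk : 0 < μ (k - 1) := hpos _ hk1m
  have hμk0 : μ (k - 1) ≤ μ 0 := hmono 0 (k - 1) (Nat.zero_le _) hk1m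
  set a := 1 - μ 0 with ha
  set b := 1 - μ (k - 1) with hb
  have ha0 : 0 ≤ a := by have := hle1 0 hm; simp [ha]; linarith
  have hab : a ≤ b := by simp [ha, hb]; linarith
  have hb1 : b < 1 := by simp [hb]; linarith
  have hb0 : 0 ≤ b := le_trans ha0 hab
  have hGa : 0 < ∑ j ∈ range k, a ^ j := by
    apply Finset.sum_pos'
    · intro i _; positivity
    · exact ⟨0, Finset.mem_range.mpr hk, by norm_num⟩
  have hGb0 : 0 ≤ ∑ j ∈ range k, b ^ j :=
    Finset.sum_nonneg fun i _ => pow_nonneg hb0 i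
  have hS : (∑ j ∈ Finset.range k, (1 / (m:ℝ)) * a ^ j)
      = (1 / (m:ℝ)) * ∑ j ∈ range k, a ^ j := by
    rw [Finset.mul_sum]
  have hSpos : 0 < ∑ j ∈ Finset.range k, (1 / (m:ℝ)) * a ^ j := by
    rw [hS]; positivity
  rw [← Finset.sum_div, div_le_div_iff₀ hSpos hμk]
  -- N * μ(k-1) ≤ μ0 * m * S = μ0 * G_a
  have hNGb : (∑ i ∈ Finset.range k, ∏ j ∈ Finset.range i, (1 - μ j))
      ≤ ∑ i ∈ range k, b ^ i := by
    apply Finset.sum_le_sum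
    intro i hi
    have hik : i < k := Finset.mem_range.mp hi
    calc ∏ j ∈ Finset.range i, (1 - μ j)
        ≤ ∏ j ∈ Finset.range i, b := by
          apply Finset.prod_le_prod
          · intro j hj
            have hjm : j < m := lt_of_lt_of_le (lt_of_lt_of_le (Finset.mem_range.mp hj) hik.le) hkm
            have := hle1 j hjm; linarith
          · intro j hj
            have hjm : j < m := lt_of_lt_of_le (lt_of_lt_of_le (Finset.mem_range.mp hj) hik.le) hkm
            have hjk : j ≤ k - 1 := Nat.le_pred_of_lt (lt_of_lt_of_le (Finset.mem_range.mp hj) hik.le)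
            have := hmono j (k - 1) hjk hk1m
            simp [hb]; linarith
      _ = b ^ i := by rw [Finset.prod_const, Finset.card_range]
  have hgb : (∑ i ∈ range k, b ^ i) * (b - 1) = b ^ k - 1 := geom_sum_mul b k
  have hga : (∑ i ∈ range k, a ^ i) * (a - 1) = a ^ k - 1 := geom_sum_mul a k
  have hpow : a ^ k ≤ b ^ k := pow_le_pow_left₀ ha0 hab k
  have h1 : (∑ i ∈ Finset.range k, ∏ j ∈ Finset.range i, (1 - μ j)) * μ (k - 1)
      ≤ 1 - b ^ k := by
    have : (∑ i ∈ range k, b ^ i) * μ (k - 1) = 1 - b ^ k := by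
      have hμb : μ (k - 1) = 1 - b := by simp [hb]
      rw [hμb]; nlinarith [hgb]
    nlinarith [hNGb, hμk]
  have h2 : (1 : ℝ) - b ^ k ≤ 1 - a ^ k := by linarith
  have h3 : (1 : ℝ) - a ^ k = μ 0 * ∑ i ∈ range k, a ^ i := by
    have hμa : μ 0 = 1 - a := by simp [ha]
    rw [hμa]; nlinarith [hga]
  have h4 : μ 0 * ↑m * (∑ j ∈ Finset.range k, (1 / (m:ℝ)) * a ^ j)
      = μ 0 * ∑ i ∈ range k, a ^ i := by
    rw [hS]
    field_simp
  linarith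
end

section
/- Pessimism-based cost minimization guarantee: let c, p ∈ [0,1]^m be true costs and probabilities, c̄ ≥ c pointwise (valid UCBs on costs), p̂ ∈ [0,1]^m arbitrary, and let Ŝ = argmin_{S∈𝒮} Σ_{q∈S} p̂(q)c̄(q). Then for the true optimum S* = argmin_{S∈𝒮} Σ_{q∈S} p(q)c(q), the excess cost satisfies Σ_{q∈Ŝ} p(q)c(q) − Σ_{q∈S*} p(q)c(q) ≤ Σ_{q∈S*} p(q)(c̄(q) − c(q)) + 2‖p̂ − p‖₁. -/
open Finset

lemma smooth_aux {Q : Type*} [Fintype Q] (p phat cbar : Q → ℝ)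
    (hcbar : ∀ q, cbar q ∈ Set.Icc (0:ℝ) 1) (S : Finset Q) :
    (∑ q ∈ S, p q * cbar q) - (∑ q ∈ S, phat q * cbar q) ≤ ∑ q, |phat q - p q| := by
  rw [← Finset.sum_sub_distrib]
  calc ∑ q ∈ S, (p q * cbar q - phat q * cbar q)
      ≤ ∑ q ∈ S, |phat q - p q| := by
        apply Finset.sum_le_sum
        intro q _
        have h1 := (hcbar q).1
        have h2 := (hcbar q).2
        have : p q * cbar q - phat q * cbar q = (p q - phat q) * cbar q := by ring
        rw [this]
        calc (p q - phat q) * cbar q ≤ |(p q - phat q) * cbar q| := le_abs_self _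
          _ = |p q - phat q| * |cbar q| := abs_mul _ _
          _ ≤ |p q - phat q| * 1 := by
              apply mul_le_mul_of_nonneg_left _ (abs_nonneg _)
              rw [abs_of_nonneg h1]; exact h2
          _ = |phat q - p q| := by rw [mul_one, abs_sub_comm]
    _ ≤ ∑ q, |phat q - p q| := Finset.sum_le_sum_of_subset_of_nonneg (Finset.subset_univ S)
        (fun q _ _ => abs_nonneg _)

/-- Pessimism-based cost minimization guarantee: with true costs `c` and arrival
probabilities `p`, valid cost UCBs `cbar ≥ c`, estimates `phat`, and `Shat` the
minimizer of `Σ_{q∈S} phat(q)·cbar(q)` over `𝒮`, the excess true cost of `Shat`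
over the true optimum `Sstar` is at most
`Σ_{q∈Sstar} p(q)(cbar(q) − c(q)) + 2‖phat − p‖₁`. -/
theorem pessimistic_cost_minimization
    {Q : Type*} [Fintype Q] (𝒮 : Finset (Finset Q)) (h𝒮 : 𝒮.Nonempty)
    (c cbar p phat : Q → ℝ)
    (hc : ∀ q, c q ∈ Set.Icc (0:ℝ) 1) (hcbar : ∀ q, cbar q ∈ Set.Icc (0:ℝ) 1)
    (hp : ∀ q, p q ∈ Set.Icc (0:ℝ) 1) (hphat : ∀ q, phat q ∈ Set.Icc (0:ℝ) 1)
    (hUCB : ∀ q, c q ≤ cbar q)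
    (Shat Sstar : Finset Q) (hShat : Shat ∈ 𝒮) (hSstar : Sstar ∈ 𝒮)
    (hShat_min : ∀ S ∈ 𝒮, (∑ q ∈ Shat, phat q * cbar q) ≤ ∑ q ∈ S, phat q * cbar q)
    (hSstar_min : ∀ S ∈ 𝒮, (∑ q ∈ Sstar, p q * c q) ≤ ∑ q ∈ S, p q * c q) :
    (∑ q ∈ Shat, p q * c q) - (∑ q ∈ Sstar, p q * c q) ≤
      (∑ q ∈ Sstar, p q * (cbar q - c q)) + 2 * ∑ q, |phat q - p q| := by
  set L := ∑ q, |phat q - p q| with hL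
  have h1 : (∑ q ∈ Shat, p q * c q) ≤ ∑ q ∈ Shat, p q * cbar q :=
    Finset.sum_le_sum fun q _ => mul_le_mul_of_nonneg_left (hUCB q) (hp q).1
  have h2 : (∑ q ∈ Shat, p q * cbar q) ≤ (∑ q ∈ Shat, phat q * cbar q) + L := by
    have := smooth_aux p phat cbar hcbar Shat
    linarith
  have h3 := hShat_min Sstar hSstar
  have h4 : (∑ q ∈ Sstar, phat q * cbar q) ≤ (∑ q ∈ Sstar, p q * cbar q) + L := by
    have := smooth_aux phat p cbar hcbar Sstar
    have habs : ∀ q, |p q - phat q| = |phat q - p q| := fun q => abs_sub_comm _ _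
    simp only [habs] at this
    linarith
  have h5 : (∑ q ∈ Sstar, p q * cbar q) =
      (∑ q ∈ Sstar, p q * c q) + ∑ q ∈ Sstar, p q * (cbar q - c q) := by
    rw [← Finset.sum_add_distrib]
    exact Finset.sum_congr rfl fun q _ => by ring
  linarith
end

section
/- ℓ₁-concentration of the empirical distribution of a categorical random variable: if q₁,…,q_n are i.i.d. draws from a distribution p on a finite set of size m, and p̂ is the empirical frequency vector, then for any δ ∈ (0,1), with probability at least 1 − δ, ‖p̂ − p‖₁ ≤ √(2m·log(2/δ)/n). -/
open MeasureTheory ProbabilityTheory Finset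

/-! For probability vectors `p̂` and `p`, `‖p̂ - p‖₁ = 2 · max_A (p̂(A) - p(A))`, the maximum being
attained at `A = {p̂ ≥ p}`. For a fixed `A`, `n (p̂(A) - p(A))` is a sum of `n` independent centred
indicators, so Hoeffding's lemma and inequality give `P(p̂(A) - p(A) ≥ ε/2) ≤ exp(-nε²/2)`. A union
bound over the `2^m` subsets yields `P(‖p̂ - p‖₁ > ε) ≤ 2^m exp(-nε²/2)`, which for the stated `ε`
equals `δ^m ≤ δ`. -/

theorem Finset.sum_abs_eq_two_mul_sum_filter_nonneg {α : Type*} [Fintype α] (x : α → ℝ)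
    (hx : ∑ i, x i = 0) : ∑ i, |x i| = 2 * ∑ i with 0 ≤ x i, x i := by
  have hsplit := sum_filter_add_sum_filter_not univ (fun i => 0 ≤ x i) x
  rw [← sum_filter_add_sum_filter_not univ (fun i => 0 ≤ x i) (fun i => |x i|),
    sum_congr rfl fun i hi => abs_of_nonneg (mem_filter.1 hi).2,
    sum_congr rfl fun i hi => abs_of_neg (not_le.1 (mem_filter.1 hi).2), sum_neg_distrib]
  linarith

section EmpiricalDistribution

variable {ι α : Type*} [Fintype ι] [DecidableEq α]

theorem sum_indicator_sub_eq_card_mul_sum_sub (x : ι → α) (p : α → ℝ) (A : Finset α)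
    (hι : Fintype.card ι ≠ 0) :
    ∑ t, ((if x t ∈ A then 1 else 0) - ∑ i ∈ A, p i)
      = Fintype.card ι * ∑ i ∈ A, ((#{t | x t = i} : ℝ) / Fintype.card ι - p i) := by
  rw [sum_sub_distrib, sum_boole, ← sum_card_fiberwise_eq_card_filter, sum_const, card_univ,
    sum_sub_distrib, ← sum_div, mul_sub, mul_div_cancel₀ _ (by exact_mod_cast hι),
    nsmul_eq_mul]
  push_cast
  rfl

theorem exists_finset_card_mul_half_le_sum_indicator_sub [Fintype α] {x : ι → α} {p : α → ℝ}
    (hsum : ∑ i, p i = 1) (hι : Fintype.card ι ≠ 0) {ε : ℝ}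
    (h : ε < ∑ i, |(#{t | x t = i} : ℝ) / Fintype.card ι - p i|) :
    ∃ A : Finset α, Fintype.card ι * (ε / 2) ≤ ∑ t, ((if x t ∈ A then 1 else 0) - ∑ i ∈ A, p i) := by
  set y : α → ℝ := fun i => (#{t | x t = i} : ℝ) / Fintype.card ι - p i
  have hN : (0 : ℝ) < Fintype.card ι := by exact_mod_cast Nat.pos_of_ne_zero hι
  have hy : ∑ i, y i = 0 := by
    have := sum_indicator_sub_eq_card_mul_sum_sub x p univ hι
    simp only [mem_univ, if_true, hsum, sub_self, sum_const_zero] at this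
    exact (mul_eq_zero.1 this.symm).resolve_left hN.ne'
  refine ⟨univ.filter (0 ≤ y ·), ?_⟩
  rw [sum_indicator_sub_eq_card_mul_sum_sub x p _ hι]
  rw [sum_abs_eq_two_mul_sum_filter_nonneg y hy] at h
  exact mul_le_mul_of_nonneg_left (by linarith) hN.le

end EmpiricalDistribution

section Concentration

variable {Ω ι α : Type*} [MeasurableSpace Ω] {P : Measure Ω} [MeasurableSpace α]
  [MeasurableSingletonClass α] {p : α → ℝ}

theorem measureReal_preimage_finset_eq_sum [IsFiniteMeasure P] {X : Ω → α} (hX : Measurable X) (hp : ∀ i, 0 ≤ p i)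
    (hdist : ∀ i, P {ω | X ω = i} = ENNReal.ofReal (p i)) (A : Finset α) :
    P.real (X ⁻¹' A) = ∑ i ∈ A, p i := by
  rw [measureReal_def, ← sum_measure_preimage_singleton A fun i _ => hX (.singleton i),
    ENNReal.toReal_sum fun i _ => measure_ne_top _ _]
  exact sum_congr rfl fun i _ => by rw [← ENNReal.toReal_ofReal (hp i), ← hdist]; rfl

variable [IsProbabilityMeasure P] [Fintype ι] [DecidableEq α]

theorem measureReal_le_sum_indicator_sub_le_exp (hp : ∀ i, 0 ≤ p i) {q : ι → Ω → α}
    (hmeas : ∀ t, Measurable (q t)) (hdist : ∀ t i, P {ω | q t ω = i} = ENNReal.ofReal (p i))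
    (hindep : iIndepFun q P) (A : Finset α) {ε : ℝ} (hε : 0 ≤ ε) :
    P.real {ω | ε ≤ ∑ t, ((if q t ω ∈ A then 1 else 0) - ∑ i ∈ A, p i)}
      ≤ Real.exp (-2 * ε ^ 2 / Fintype.card ι) := by
  set g : α → ℝ := fun i => if i ∈ A then 1 else 0
  have hg : Measurable g := Measurable.ite A.measurableSet measurable_const measurable_const
  have hg_mean : ∀ t, P[g ∘ q t] = ∑ i ∈ A, p i := fun t => by
    rw [← measureReal_preimage_finset_eq_sum (hmeas t) hp (hdist t) A,
      ← integral_indicator_one (hmeas t A.measurableSet)]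
    congr 1 with ω
    by_cases h : q t ω ∈ A <;> simp [g, h]
  have hsubG : ∀ t ∈ (univ : Finset ι),
      HasSubgaussianMGF (fun ω => g (q t ω) - ∑ i ∈ A, p i) ((‖(1 : ℝ) - 0‖₊ / 2) ^ 2) P :=
    fun t _ => hg_mean t ▸ hasSubgaussianMGF_of_mem_Icc (hg.comp (hmeas t)).aemeasurable
      (ae_of_all _ fun ω => by by_cases h : q t ω ∈ A <;> simp [g, h])
  have hindep_centered : iIndepFun (fun t ω => g (q t ω) - ∑ i ∈ A, p i) P :=
    hindep.comp (fun _ i => g i - ∑ i ∈ A, p i) fun _ => hg.sub_const _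
  refine (HasSubgaussianMGF.measure_sum_ge_le_of_iIndepFun hindep_centered hsubG hε).trans_eq ?_
  congr 1
  push_cast
  simp only [sub_zero, norm_one, one_div, inv_pow, sum_const, card_univ, nsmul_eq_mul, neg_mul]
  ring

theorem measureReal_lt_sum_abs_empirical_sub_le [Fintype α] (hp : ∀ i, 0 ≤ p i)
    (hsum : ∑ i, p i = 1) {q : ι → Ω → α} (hmeas : ∀ t, Measurable (q t))
    (hdist : ∀ t i, P {ω | q t ω = i} = ENNReal.ofReal (p i)) (hindep : iIndepFun q P)
    (hι : Fintype.card ι ≠ 0) {ε : ℝ} (hε : 0 ≤ ε) :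
    P.real {ω | ε < ∑ i, |(#{t | q t ω = i} : ℝ) / Fintype.card ι - p i|}
      ≤ 2 ^ Fintype.card α * Real.exp (-(Fintype.card ι * ε ^ 2 / 2)) := by
  have hN : (0 : ℝ) < Fintype.card ι := by exact_mod_cast Nat.pos_of_ne_zero hι
  calc _ ≤ P.real (⋃ A ∈ (univ : Finset (Finset α)),
          {ω | Fintype.card ι * (ε / 2) ≤ ∑ t, ((if q t ω ∈ A then 1 else 0) - ∑ i ∈ A, p i)}) := by
        refine measureReal_mono (fun ω hω => ?_) (measure_ne_top _ _)
        simpa using exists_finset_card_mul_half_le_sum_indicator_sub hsum hι hω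
    _ ≤ ∑ A : Finset α, Real.exp (-2 * (Fintype.card ι * (ε / 2)) ^ 2 / Fintype.card ι) :=
        (measureReal_biUnion_finset_le _ _).trans <| sum_le_sum fun A _ =>
          measureReal_le_sum_indicator_sub_le_exp hp hmeas hdist hindep A (by positivity)
    _ = 2 ^ Fintype.card α * Real.exp (-(Fintype.card ι * ε ^ 2 / 2)) := by
        rw [sum_const, card_univ, Fintype.card_finset, nsmul_eq_mul]
        push_cast
        congr 2
        field_simp

theorem ofReal_one_sub_le_measure_le_of_measureReal_lt_le {f : Ω → ℝ} {c δ : ℝ}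
    (h : P.real {ω | c < f ω} ≤ δ) : ENNReal.ofReal (1 - δ) ≤ P {ω | f ω ≤ c} := by
  have hcover : Set.univ ⊆ {ω | f ω ≤ c} ∪ {ω | c < f ω} := fun ω _ => le_or_gt (f ω) c
  have := (measureReal_mono hcover).trans (measureReal_union_le (μ := P) _ _)
  rw [probReal_univ] at this
  exact (ENNReal.ofReal_le_ofReal (by linarith)).trans_eq ofReal_measureReal

end Concentration

/-- ℓ₁-concentration of the empirical distribution of a categorical random
variable: for i.i.d. draws `q_1, …, q_n` from a distribution `p` on `Fin m`,
with probability at least `1 − δ` the empirical frequency vector `p̂` satisfies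
`‖p̂ − p‖₁ ≤ √(2m·log(2/δ)/n)`. -/
theorem empirical_distribution_l1_concentration
    {Ω : Type*} [MeasurableSpace Ω] (P : Measure Ω) [IsProbabilityMeasure P]
    (n m : ℕ) (hn : 0 < n) (hm : 0 < m)
    (p : Fin m → ℝ) (hp : ∀ i, 0 ≤ p i) (hsum : ∑ i, p i = 1)
    (q : Fin n → Ω → Fin m)
    (hmeas : ∀ t, Measurable (q t))
    (hdist : ∀ t i, P {ω | q t ω = i} = ENNReal.ofReal (p i))
    (hindep : iIndepFun q P)
    (δ : ℝ) (hδ : δ ∈ Set.Ioo (0:ℝ) 1) :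
    ENNReal.ofReal (1 - δ) ≤
      P {ω | ∑ i, |((Finset.univ.filter (fun t => q t ω = i)).card : ℝ) / n - p i|
              ≤ Real.sqrt (2 * m * Real.log (2/δ) / n)} := by
  obtain ⟨hδ0, hδ1⟩ := hδ
  set ε := Real.sqrt (2 * m * Real.log (2 / δ) / n)
  have hlog : 0 < Real.log (2 / δ) := Real.log_pos (by rw [lt_div_iff₀ hδ0]; linarith)
  have hε : n * ε ^ 2 / 2 = m * Real.log (2 / δ) := by
    rw [Real.sq_sqrt (by positivity)]
    field_simp
  have hbad := measureReal_lt_sum_abs_empirical_sub_le hp hsum hmeas hdist hindep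
    (by simpa using hn.ne') (by positivity : 0 ≤ ε)
  simp only [Fintype.card_fin, hε] at hbad
  refine ofReal_one_sub_le_measure_le_of_measureReal_lt_le (hbad.trans ?_)
  rw [Real.exp_neg, Real.exp_nat_mul, Real.exp_log (by positivity), ← inv_pow, ← mul_pow,
    inv_div, mul_div_cancel₀ _ two_ne_zero]
  exact pow_le_of_le_one hδ0.le hδ1.le hm.ne'
end
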